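/- In the twisted Laurent series division ring Δ = Δ_{2r}(k; n₁,…,n_r) with ω_m ∈ k of multiplicative order m = lcm(n_i), no primitive root of unity in k of order strictly greater than m can be a multiplicative commutator in Δ*. In particular, if all n_i = p then ω_{p²} is not of the form t a t⁻¹ a⁻¹ for t, a ∈ Δ*. -/

import Mathlib

/-!
Every unit of `Δ` is `a · x^α · (1 + d)` with `a ∈ k*` and `d ∈ M_Δ`, and `a` is determined by the
unit (compare valuations, then compare modulo `M_Δ`). Monomials multiply up to powers of `ω` and
`1 + M_Δ` is stable under conjugation, so `a` modulo `⟨ω⟩` is a homomorphism `Δ* → k*/⟨ω⟩` into an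
abelian group: it kills commutators. A scalar `ζ` is sent to the class of `ζ`, so a commutator
`ζ` is a power of `ω`, hence `ζ ^ m = 1`, which is impossible for a primitive root of order `q > m`.
-/

namespace AmitsurNote

noncomputable instance instLinOrdLexPi (r : ℕ) : LinearOrder (Lex (Fin r → ℤ)) :=
  letI : WellFoundedLT (Fin r) := inferInstance
  inferInstance

noncomputable instance instLOACGLexPi (r : ℕ) : IsOrderedAddMonoid (Lex (Fin r → ℤ)) := by
  first
  | exact inferInstance
  | exact { add_le_add_left := fun _ _ h c => add_le_add_left h c }

noncomputable instance instMinLexPi (r : ℕ) : Min (Lex (Fin r → ℤ)) :=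
  (instLinOrdLexPi r).toMin

/-- An abstract model of the iterated twisted Laurent series division ring
`Δ = Δ_{2r}(k; n₁,…,n_r)` together with its natural valuation `v` with values in the
lexicographically ordered group `ℤ^{2r}`: every series is `a·x^α·(1 + d)` with `a ∈ k*`,
`α = v(f)`, and `v(d) > 0`; the monomials `x^α` multiply up to powers of the fixed root of
unity `ω = ω_m`. -/
structure TwistedLaurentValuedModel (k : Type*) [Field k] (r : ℕ) (ω : k) where
  Δ : Type*
  [instΔ : DivisionRing Δ]
  ι : k →+* Δ
  central : ∀ (a : k) (z : Δ), ι a * z = z * ι a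
  /-- the unit `ω_m` of `Δ`. -/
  ωu : Δˣ
  hωu : (ωu : Δ) = ι ω
  /-- the natural valuation of `Δ` (with junk value at `0`). -/
  v : Δ → Lex (Fin (2 * r) → ℤ)
  v_mul : ∀ x y : Δ, x ≠ 0 → y ≠ 0 → v (x * y) = v x + v y
  v_add : ∀ x y : Δ, x ≠ 0 → y ≠ 0 → x + y ≠ 0 → min (v x) (v y) ≤ v (x + y)
  v_scalar : ∀ a : k, a ≠ 0 → v (ι a) = 0
  /-- the monomial `x^α`. -/
  M : (Fin (2 * r) → ℤ) → Δˣ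
  v_M : ∀ α, v (M α) = toLex α
  M_twist : ∀ α β, ∃ e : ℤ, M α * M β = ωu ^ e * M (α + β)
  factor : ∀ u : Δˣ, ∃ (a : k) (α : Fin (2 * r) → ℤ) (d : Δ),
    (d = 0 ∨ 0 < v d) ∧ (u : Δ) = ι a * (M α : Δ) * (1 + d)

attribute [instance] TwistedLaurentValuedModel.instΔ

open scoped commutatorElement

namespace TwistedLaurentValuedModel

variable {k : Type*} [Field k] {r : ℕ} {ω : k} {T : TwistedLaurentValuedModel k r ω}

lemma ω_ne_zero (T : TwistedLaurentValuedModel k r ω) : ω ≠ 0 :=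
  fun h => T.ωu.ne_zero (by simp [T.hωu, h])

noncomputable def ωUnit (T : TwistedLaurentValuedModel k r ω) : kˣ := Units.mk0 ω T.ω_ne_zero

@[simp] lemma val_ωUnit (T : TwistedLaurentValuedModel k r ω) : (T.ωUnit : k) = ω := rfl

lemma v_one : T.v 1 = 0 := by simpa using T.v_scalar 1 one_ne_zero

lemma v_ι_mul {a : k} (ha : a ≠ 0) {x : T.Δ} (hx : x ≠ 0) : T.v (T.ι a * x) = T.v x := by
  rw [T.v_mul _ _ ((map_ne_zero T.ι).mpr ha) hx, T.v_scalar a ha, zero_add]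

lemma v_neg {x : T.Δ} (hx : x ≠ 0) : T.v (-x) = T.v x := by
  simpa using v_ι_mul (T := T) (neg_ne_zero.mpr one_ne_zero) hx

lemma v_units_inv (u : T.Δˣ) : T.v ↑u⁻¹ = -T.v u := by
  have h := T.v_mul _ _ u⁻¹.ne_zero u.ne_zero
  rw [u.inv_mul, v_one] at h
  exact eq_neg_of_add_eq_zero_left h.symm

lemma add_ne_zero_of_v_lt {x y : T.Δ} (hx : x ≠ 0) (h : T.v x < T.v y) : x + y ≠ 0 := by
  intro hxy
  rw [eq_neg_of_add_eq_zero_right hxy, v_neg hx] at h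
  exact h.false

lemma v_add_of_v_lt {x y : T.Δ} (hx : x ≠ 0) (hy : y ≠ 0) (h : T.v x < T.v y) :
    T.v (x + y) = T.v x := by
  have hxy := add_ne_zero_of_v_lt hx h
  refine le_antisymm ?_ ((min_eq_left h.le).symm.trans_le (T.v_add x y hx hy hxy))
  have h' := T.v_add (x + y) (-y) hxy (neg_ne_zero.mpr hy) (by simpa using hx)
  rw [add_neg_cancel_right, v_neg hy] at h'
  rcases min_le_iff.mp h' with h' | h'
  · exact h'
  · exact absurd h' (not_le.mpr h)

variable (T) in
/-- `M_Δ`, the maximal ideal of the valuation ring of `Δ`. -/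
def maxIdeal : NonUnitalSubring T.Δ where
  carrier := {d | d = 0 ∨ 0 < T.v d}
  zero_mem' := Or.inl rfl
  add_mem' {x y} hx hy := by
    by_cases hx0 : x = 0
    · simpa [hx0] using hy
    by_cases hy0 : y = 0
    · simpa [hy0] using hx
    by_cases hxy : x + y = 0
    · exact Or.inl hxy
    exact Or.inr ((lt_min (hx.resolve_left hx0) (hy.resolve_left hy0)).trans_le
      (T.v_add x y hx0 hy0 hxy))
  mul_mem' {x y} hx hy := by
    by_cases hx0 : x = 0
    · simp [hx0]
    by_cases hy0 : y = 0
    · simp [hy0]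
    refine Or.inr ?_
    rw [T.v_mul x y hx0 hy0]
    exact add_pos (hx.resolve_left hx0) (hy.resolve_left hy0)
  neg_mem' {x} hx := by
    by_cases hx0 : x = 0
    · simp [hx0]
    refine Or.inr ?_
    rw [v_neg hx0]
    exact hx.resolve_left hx0

lemma ι_mul_mem_maxIdeal (c : k) {d : T.Δ} (hd : d ∈ T.maxIdeal) :
    T.ι c * d ∈ T.maxIdeal := by
  by_cases hc : c = 0
  · simp [hc, T.maxIdeal.zero_mem]
  by_cases hd0 : d = 0
  · simp [hd0, T.maxIdeal.zero_mem]
  exact Or.inr (by rw [v_ι_mul hc hd0]; exact hd.resolve_left hd0)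

lemma ι_mem_maxIdeal_iff {c : k} : T.ι c ∈ T.maxIdeal ↔ c = 0 := by
  refine ⟨fun h => by_contra fun hc => ?_, fun h => by simp [h, T.maxIdeal.zero_mem]⟩
  rcases h with h | h
  · exact hc ((map_eq_zero T.ι).mp h)
  · exact (T.v_scalar c hc ▸ h).false

lemma units_inv_mul_mul_mem_maxIdeal (u : T.Δˣ) {d : T.Δ} (hd : d ∈ T.maxIdeal) :
    ↑u⁻¹ * d * u ∈ T.maxIdeal := by
  by_cases hd0 : d = 0
  · simp [hd0, T.maxIdeal.zero_mem]
  refine Or.inr ?_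
  rw [T.v_mul _ _ (mul_ne_zero u⁻¹.ne_zero hd0) u.ne_zero, T.v_mul _ _ u⁻¹.ne_zero hd0,
    v_units_inv, neg_add_cancel_comm]
  exact hd.resolve_left hd0

lemma v_one_lt {d : T.Δ} (hd : d ∈ T.maxIdeal) (hd0 : d ≠ 0) : T.v 1 < T.v d :=
  v_one (T := T) ▸ hd.resolve_left hd0

lemma v_one_add {d : T.Δ} (hd : d ∈ T.maxIdeal) : T.v (1 + d) = 0 := by
  by_cases hd0 : d = 0
  · simp [hd0, v_one]
  rw [v_add_of_v_lt one_ne_zero hd0 (v_one_lt hd hd0), v_one]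

lemma one_add_ne_zero {d : T.Δ} (hd : d ∈ T.maxIdeal) : (1 : T.Δ) + d ≠ 0 := by
  by_cases hd0 : d = 0
  · simp [hd0]
  exact add_ne_zero_of_v_lt one_ne_zero (v_one_lt hd hd0)

variable (T) in
lemma M_mul_M (α β : Fin (2 * r) → ℤ) :
    ∃ e : ℤ, (T.M α : T.Δ) * T.M β = T.ι (ω ^ e) * T.M (α + β) := by
  obtain ⟨e, he⟩ := T.M_twist α β
  refine ⟨e, ?_⟩
  rw [← Units.val_mul, he, Units.val_mul, Units.val_zpow_eq_zpow_val, T.hωu, map_zpow₀]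

variable (T) in
lemma exists_M_zero_eq : ∃ e : ℤ, (T.M 0 : T.Δ) = T.ι (ω ^ e) := by
  obtain ⟨e, he⟩ := T.M_mul_M 0 0
  rw [add_zero] at he
  exact ⟨e, mul_right_cancel₀ (T.M 0).ne_zero he⟩

variable (T) in
def HasLeadCoeff (x : T.Δ) (a : k) : Prop :=
  ∃ α, ∃ d ∈ T.maxIdeal, x = T.ι a * T.M α * (1 + d)

lemma v_ι_mul_M_mul_one_add {a : k} (ha : a ≠ 0) (α : Fin (2 * r) → ℤ) {d : T.Δ}
    (hd : d ∈ T.maxIdeal) : T.v (T.ι a * T.M α * (1 + d)) = toLex α := by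
  rw [T.v_mul _ _ (mul_ne_zero ((map_ne_zero T.ι).mpr ha) (T.M α).ne_zero) (one_add_ne_zero hd),
    v_one_add hd, v_ι_mul ha (T.M α).ne_zero, T.v_M, add_zero]

lemma HasLeadCoeff.unique {x : T.Δ} {a a' : kˣ} (h : T.HasLeadCoeff x a)
    (h' : T.HasLeadCoeff x a') : a = a' := by
  obtain ⟨α, d, hd, rfl⟩ := h
  obtain ⟨α', d', hd', hx⟩ := h'
  obtain rfl : α = α' := toLex.injective <| by
    rw [← v_ι_mul_M_mul_one_add a.ne_zero α hd, ← v_ι_mul_M_mul_one_add a'.ne_zero α' hd', hx]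
  have hcancel : T.ι a * (1 + d) = T.ι a' * (1 + d') := by
    refine mul_left_cancel₀ (T.M α).ne_zero ?_
    rw [← mul_assoc, ← mul_assoc, ← T.central, ← T.central, hx]
  have hsub : T.ι (a - a') = T.ι a' * d' - T.ι a * d := by
    rw [map_sub, sub_eq_sub_iff_add_eq_add, add_comm (T.ι a' * d'), ← mul_one_add, ← mul_one_add,
      hcancel]
  have hmem : T.ι (a - a' : k) ∈ T.maxIdeal := by
    rw [hsub]
    exact sub_mem (ι_mul_mem_maxIdeal _ hd') (ι_mul_mem_maxIdeal _ hd)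
  exact Units.ext (sub_eq_zero.mp (ι_mem_maxIdeal_iff.mp hmem))

lemma HasLeadCoeff.mul {x y : T.Δ} {a b : k} (hx : T.HasLeadCoeff x a)
    (hy : T.HasLeadCoeff y b) : ∃ e : ℤ, T.HasLeadCoeff (x * y) (ω ^ e * a * b) := by
  obtain ⟨α, d, hd, rfl⟩ := hx
  obtain ⟨β, d', hd', rfl⟩ := hy
  obtain ⟨e, he⟩ := T.M_mul_M α β
  set u := T.M β
  -- moving `1 + d` past `x^β` conjugates `d`, which stays in `M_Δ`
  set d'' := ↑u⁻¹ * d * u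
  have hcomm : (1 + d) * u = u * (1 + d'') := by
    rw [mul_add, mul_one, ← mul_assoc, ← mul_assoc, u.mul_inv, one_mul, add_mul, one_mul]
  refine ⟨e, α + β, d'' + d' + d'' * d',
    add_mem (add_mem (units_inv_mul_mul_mem_maxIdeal u hd) hd')
      (mul_mem (units_inv_mul_mul_mem_maxIdeal u hd) hd'), ?_⟩
  calc T.ι a * T.M α * (1 + d) * (T.ι b * u * (1 + d'))
      = T.ι a * (T.M α * (1 + d) * T.ι b) * u * (1 + d') := by simp only [mul_assoc]
    _ = T.ι a * T.ι b * (T.M α * ((1 + d) * u)) * (1 + d') := by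
        rw [← T.central b]
        simp only [mul_assoc]
    _ = T.ι a * T.ι b * T.ι (ω ^ e) * T.M (α + β) * ((1 + d'') * (1 + d')) := by
        rw [hcomm, ← mul_assoc (T.M α : T.Δ), he]
        simp only [mul_assoc]
    _ = T.ι (ω ^ e * a * b) * T.M (α + β) * (1 + (d'' + d' + d'' * d')) := by
        rw [← map_mul, ← map_mul, mul_comm (a * b), ← mul_assoc]
        noncomm_ring

variable (T) in
lemma hasLeadCoeff_ι (c : k) : ∃ e : ℤ, T.HasLeadCoeff (T.ι c) (ω ^ e * c) := by
  obtain ⟨e, he⟩ := T.exists_M_zero_eq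
  refine ⟨-e, 0, 0, zero_mem _, ?_⟩
  rw [add_zero, mul_one, he, ← map_mul, mul_right_comm, ← zpow_add₀ T.ω_ne_zero, neg_add_cancel,
    zpow_zero, one_mul]

variable (T) in
lemma exists_hasLeadCoeff (u : T.Δˣ) : ∃ a : kˣ, T.HasLeadCoeff u a := by
  obtain ⟨a, α, d, hd, hu⟩ := T.factor u
  have ha : a ≠ 0 := by
    rintro rfl
    exact u.ne_zero (by simp [hu])
  exact ⟨Units.mk0 a ha, α, d, hd, hu⟩

variable (T) in
noncomputable def leadCoeff (u : T.Δˣ) : kˣ := (T.exists_hasLeadCoeff u).choose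

lemma hasLeadCoeff_leadCoeff (u : T.Δˣ) : T.HasLeadCoeff u (T.leadCoeff u) :=
  (T.exists_hasLeadCoeff u).choose_spec

lemma leadCoeff_eq_of_hasLeadCoeff {u : T.Δˣ} {a : kˣ} (h : T.HasLeadCoeff u a) :
    T.leadCoeff u = a :=
  (hasLeadCoeff_leadCoeff u).unique h

lemma leadCoeff_mul (u w : T.Δˣ) :
    ∃ e : ℤ, T.leadCoeff (u * w) = T.ωUnit ^ e * T.leadCoeff u * T.leadCoeff w := by
  obtain ⟨e, h⟩ := (hasLeadCoeff_leadCoeff u).mul (hasLeadCoeff_leadCoeff w)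
  refine ⟨e, leadCoeff_eq_of_hasLeadCoeff ?_⟩
  simpa [Units.val_zpow_eq_zpow_val] using h

lemma leadCoeff_of_val_eq_ι {u : T.Δˣ} {c : kˣ} (h : (u : T.Δ) = T.ι c) :
    ∃ e : ℤ, T.leadCoeff u = T.ωUnit ^ e * c := by
  obtain ⟨e, he⟩ := T.hasLeadCoeff_ι c
  refine ⟨e, leadCoeff_eq_of_hasLeadCoeff ?_⟩
  simpa [h, Units.val_zpow_eq_zpow_val] using he

lemma mk_ωUnit_zpow_mul (e : ℤ) (x : kˣ) :
    ((T.ωUnit ^ e * x : kˣ) : kˣ ⧸ Subgroup.zpowers T.ωUnit) = x := by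
  rw [QuotientGroup.eq]
  simp [Subgroup.mem_zpowers_iff]

variable (T) in
noncomputable def leadCoeffMod : T.Δˣ →* kˣ ⧸ Subgroup.zpowers T.ωUnit where
  toFun u := T.leadCoeff u
  map_one' := by
    obtain ⟨e, he⟩ := leadCoeff_of_val_eq_ι (T := T) (u := 1) (c := 1) (by simp)
    rw [he, mk_ωUnit_zpow_mul, QuotientGroup.mk_one]
  map_mul' u w := by
    obtain ⟨e, he⟩ := leadCoeff_mul u w
    rw [he, mul_assoc, mk_ωUnit_zpow_mul, QuotientGroup.mk_mul]

lemma leadCoeffMod_of_val_eq_ι {u : T.Δˣ} {c : kˣ} (h : (u : T.Δ) = T.ι c) :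
    T.leadCoeffMod u = c := by
  obtain ⟨e, he⟩ := leadCoeff_of_val_eq_ι h
  change ((T.leadCoeff u : kˣ) : kˣ ⧸ Subgroup.zpowers T.ωUnit) = c
  rw [he, mk_ωUnit_zpow_mul]

lemma leadCoeffMod_commutatorElement (t a : T.Δˣ) : T.leadCoeffMod ⁅t, a⁆ = 1 := by
  rw [map_commutatorElement, commutatorElement_eq_one_iff_commute]
  exact Commute.all (T.leadCoeffMod t) (T.leadCoeffMod a)

end TwistedLaurentValuedModel

/-- In `Δ = Δ_{2r}(k; n₁,…,n_r)` (with `ω = ω_m` a primitive `m`-th root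
of unity, `m = lcm(nᵢ)`), no primitive root of unity in `k` of order strictly greater than
`m` is a multiplicative commutator in `Δ*`.  (In particular, when all `nᵢ = p`, the root
`ω_{p²}` is not of the form `t a t⁻¹ a⁻¹`.) -/
theorem root_of_unity_not_commutator (k : Type*) [Field k] (r m q : ℕ) (hm : 0 < m)
    (ω : k) (hω : IsPrimitiveRoot ω m) (T : TwistedLaurentValuedModel k r ω)
    (ζ : k) (hζ : IsPrimitiveRoot ζ q) (hq : m < q) :
    ¬ ∃ t a : T.Δˣ, T.ι ζ = ((t * a * t⁻¹ * a⁻¹ : T.Δˣ) : T.Δ) := by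
  rintro ⟨t, a, h⟩
  have hζ0 : ζ ≠ 0 := hζ.ne_zero (by omega)
  have hclass : ((Units.mk0 ζ hζ0 : kˣ) : kˣ ⧸ Subgroup.zpowers T.ωUnit) = 1 := by
    rw [← T.leadCoeffMod_of_val_eq_ι (u := ⁅t, a⁆) h.symm, T.leadCoeffMod_commutatorElement]
  obtain ⟨j, hj⟩ := Subgroup.mem_zpowers_iff.mp ((QuotientGroup.eq_one_iff _).mp hclass)
  have hζm : ζ ^ m = 1 := by
    have hζω : ζ = ω ^ j := by simpa [Units.val_zpow_eq_zpow_val] using (congrArg Units.val hj).symm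
    rw [hζω, ← zpow_natCast, ← zpow_mul, mul_comm, zpow_mul, zpow_natCast, hω.pow_eq_one, one_zpow]
  have hqm := Nat.le_of_dvd hm (hζ.dvd_of_pow_eq_one m hζm)
  omega

end AmitsurNote
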